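/- If π1 ≤ π2 in the refinement order on noncrossing partitions of {1,…,n}, then T_{π1} ≤ T_{π2} in the Tamari lattice Tam_n. -/

import Mathlib

/-- Planar binary trees. -/
inductive BT : Type
  | leaf : BT
  | node : BT → BT → BT
deriving DecidableEq

namespace BT

/-- Number of internal vertices. -/
def size : BT → ℕ
  | leaf => 0
  | node l r => l.size + r.size + 1

/-- One left rotation somewhere in the tree (covering relation of the Tamari lattice). -/
inductive Rot : BT → BT → Prop
  | root (a b c : BT) : Rot (node (node a b) c) (node a (node b c))
  | left {l l' : BT} (r : BT) : Rot l l' → Rot (node l r) (node l' r)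
  | right (l : BT) {r r' : BT} : Rot r r' → Rot (node l r) (node l r')

/-- The Tamari order: reflexive transitive closure of left rotations. -/
def tamariLE (S T : BT) : Prop := Relation.ReflTransGen Rot S T

/-- The partial order induced by a binary tree on `{1,…,size}` via in-order labelling:
`rel T i j` iff the vertex labelled `i` lies in the subtree rooted at the vertex labelled `j`. -/
def rel : BT → ℕ → ℕ → Prop
  | leaf, _, _ => False
  | node l r, i, j =>
      (j = l.size + 1 ∧ 1 ≤ i ∧ i ≤ l.size + r.size + 1) ∨
      rel l i j ∨
      (∃ i' j', rel r i' j' ∧ i = i' + l.size + 1 ∧ j = j' + l.size + 1)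

/-- Decreasing relations of a tree: pairs `(c, a)` with `a < c` and `c ◁ a`. -/
def Dec (T : BT) : Set (ℕ × ℕ) := {p | p.2 < p.1 ∧ T.rel p.1 p.2}

/-- Increasing relations of a tree: pairs `(a, c)` with `a < c` and `a ◁ c`. -/
def Inc (T : BT) : Set (ℕ × ℕ) := {p | p.1 < p.2 ∧ T.rel p.1 p.2}

/-- Left/right mirror image of a planar binary tree. -/
def mirror : BT → BT
  | leaf => leaf
  | node l r => node r.mirror l.mirror

/-- In-order label of the root (0 for the empty tree). -/
def rootLabel : BT → ℕ
  | leaf => 0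
  | node l _ => l.size + 1

/-- `rcRel T i j` iff, under in-order labelling, the vertex `j` is the right child of vertex `i`. -/
def rcRel : BT → ℕ → ℕ → Prop
  | leaf, _, _ => False
  | node l r, i, j =>
      (i = l.size + 1 ∧ r ≠ leaf ∧ j = l.size + 1 + r.rootLabel) ∨
      rcRel l i j ∨
      (∃ i' j', rcRel r i' j' ∧ i = i' + l.size + 1 ∧ j = j' + l.size + 1)

/-- `graft T i S` grafts the root of `S` on the `i`-th leaf of `T` (leaves numbered 1,…,size+1
from left to right). -/
def graft : BT → ℕ → BT → BT
  | leaf, _, S => S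
  | node l r, i, S =>
      if i ≤ l.size + 1 then node (l.graft i S) r
      else node l (r.graft (i - (l.size + 1)) S)

end BT

/-- An interval-poset of size `n`: a partial order on `{1,…,n}` (encoded as a relation on `ℕ`
supported and reflexive on `{1,…,n}`) satisfying the two interval-poset conditions. -/
def IsIntervalPoset (n : ℕ) (r : ℕ → ℕ → Prop) : Prop :=
  (∀ a b, r a b → 1 ≤ a ∧ a ≤ n ∧ 1 ≤ b ∧ b ≤ n) ∧
  (∀ a, 1 ≤ a → a ≤ n → r a a) ∧
  (∀ a b c, r a b → r b c → r a c) ∧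
  (∀ a b, r a b → r b a → a = b) ∧
  (∀ a b c, a < b → b < c → r a c → r b c) ∧
  (∀ a b c, a < b → b < c → r c a → r c b)

/-- The Châtel–Pons interval-poset of an interval `[S,T]`: reflexivity together with the
decreasing relations of `S` and the increasing relations of `T`. -/
def ipOf (S T : BT) : ℕ → ℕ → Prop := fun a b =>
  (a = b ∧ 1 ≤ a ∧ a ≤ S.size) ∨ (b < a ∧ S.rel a b) ∨ (a < b ∧ T.rel a b)

/-- `HasseCov r a b`: the relation `a ◁ b` is a cover relation (an edge `a → b` of the
Hasse diagram) of the poset `r`. -/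
def HasseCov (r : ℕ → ℕ → Prop) (a b : ℕ) : Prop :=
  r a b ∧ a ≠ b ∧ ∀ c, r a c → r c b → c = a ∨ c = b

/-- An exceptional interval-poset: the Hasse diagram contains no configuration
`y → x`, `y → z` with `x < y < z`. -/
def IsExceptional (n : ℕ) (r : ℕ → ℕ → Prop) : Prop :=
  IsIntervalPoset n r ∧
  ¬∃ x y z, x < y ∧ y < z ∧ HasseCov r y x ∧ HasseCov r y z

/-- A noncrossing tree in the based regular `(n+1)`-gon, with vertices `0,…,n`:
a spanning tree whose edges pairwise do not cross. Boundary edge `i` (for `1 ≤ i ≤ n`)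
joins vertices `i-1` and `i`; the base joins vertices `0` and `n`. -/
def IsNCTree (n : ℕ) (G : SimpleGraph (Fin (n + 1))) : Prop :=
  G.IsTree ∧
  ∀ a b c d : Fin (n + 1), G.Adj a b → G.Adj c d →
    ¬((a : ℕ) < c ∧ (c : ℕ) < b ∧ (b : ℕ) < d)

/-- Adjacency in a graph on `Fin (n+1)`, read on natural numbers. -/
def adjN (n : ℕ) (G : SimpleGraph (Fin (n + 1))) (a b : ℕ) : Prop :=
  ∃ (ha : a < n + 1) (hb : b < n + 1), G.Adj ⟨a, ha⟩ ⟨b, hb⟩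

/-- `EdgeLabel n G a b i`: the edge of the noncrossing tree `G` joining vertices `a < b`
carries the label `i`, i.e. it separates boundary edge `i` from the base and `i` is either
the edge itself (boundary case) or an open boundary edge. -/
def EdgeLabel (n : ℕ) (G : SimpleGraph (Fin (n + 1))) (a b i : ℕ) : Prop :=
  a < b ∧ b ≤ n ∧ adjN n G a b ∧ a < i ∧ i ≤ b ∧ (b = a + 1 ∨ ¬adjN n G (i - 1) i)

/-- The relation `◁_T` induced by a noncrossing tree: `i ◁ j` iff the edge labelled `i`
is separated from the base by the edge labelled `j` (plus reflexivity on `{1,…,n}`). -/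
def ncRel (n : ℕ) (G : SimpleGraph (Fin (n + 1))) : ℕ → ℕ → Prop := fun i j =>
  (i = j ∧ 1 ≤ i ∧ i ≤ n) ∨
  ∃ a b c d, EdgeLabel n G a b i ∧ EdgeLabel n G c d j ∧ c ≤ a ∧ b ≤ d ∧ ¬(a = c ∧ b = d)

/-- The graph `T_P` associated to an interval-poset `P`: for each `v`, an edge from the left
side of `min {x | x ◁ v}` (vertex `min − 1`) to the right side of `max {x | x ◁ v}`. -/
noncomputable def graphOf (n : ℕ) (r : ℕ → ℕ → Prop) : SimpleGraph (Fin (n + 1)) :=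
  SimpleGraph.fromRel (fun a b =>
    ∃ v, 1 ≤ v ∧ v ≤ n ∧ (a : ℕ) + 1 = sInf {x | r x v} ∧ (b : ℕ) = sSup {x | r x v})

/-- The partition `π_T` of a binary tree, as an equivalence-type relation: the finest
partition in which every vertex and its right child lie in the same block. -/
def sameBlock (T : BT) : ℕ → ℕ → Prop :=
  Relation.EqvGen (fun a b => T.rcRel a b ∨ T.rcRel b a)

/-- A relation (thought of as "same block of a partition") is noncrossing. -/
def IsNoncrossingRel (r : ℕ → ℕ → Prop) : Prop :=
  ¬∃ i j k l, i < j ∧ j < k ∧ k < l ∧ r i k ∧ r j l ∧ ¬r i j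

/-- The partition `π_T` of `{1,…,n}` associated to a binary tree, restricted to its support. -/
def partOf (T : BT) : ℕ → ℕ → Prop := fun a b =>
  sameBlock T a b ∧ 1 ≤ a ∧ a ≤ T.size ∧ 1 ≤ b ∧ b ≤ T.size

/-- A noncrossing partition of `{1,…,n}`, encoded as its "same block" equivalence relation. -/
def NCPartition (n : ℕ) (r : ℕ → ℕ → Prop) : Prop :=
  (∀ a b, r a b → 1 ≤ a ∧ a ≤ n ∧ 1 ≤ b ∧ b ≤ n) ∧
  (∀ a, 1 ≤ a → a ≤ n → r a a) ∧
  (∀ a b, r a b → r b a) ∧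
  (∀ a b c, r a b → r b c → r a c) ∧
  IsNoncrossingRel r

/-- `SubtreeAt S i j A`: `A` is a (nonempty) subtree of `S` rooted at an internal vertex,
whose leaves are the leaves `i,…,j` of `S`. -/
def SubtreeAt : BT → ℕ → ℕ → BT → Prop
  | .leaf, _, _, _ => False
  | .node l r, i, j, A =>
      (A = .node l r ∧ i = 1 ∧ j = (BT.node l r).size + 1) ∨
      SubtreeAt l i j A ∨
      (∃ i' j', SubtreeAt r i' j' A ∧ i = i' + l.size + 1 ∧ j = j' + l.size + 1)

/-- A new interval of `Tam n`: an interval that cannot be obtained as the grafting of two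
intervals of smaller sizes. -/
def IsNewInterval (n : ℕ) (S T : BT) : Prop :=
  S.size = n ∧ T.size = n ∧ BT.tamariLE S T ∧
  ¬∃ (S1 T1 S2 T2 : BT) (i : ℕ),
      S1.size = T1.size ∧ S2.size = T2.size ∧ S1.size < n ∧ S2.size < n ∧
      BT.tamariLE S1 T1 ∧ BT.tamariLE S2 T2 ∧ 1 ≤ i ∧ i ≤ S1.size + 1 ∧
      S = S1.graft i S2 ∧ T = T1.graft i T2

/-- The rise of a relation of size `n`: keep the decreasing relations, shift the increasing
relations by `+1`, on the ground set `{1,…,n+1}`. -/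
def riseRel (n : ℕ) (r : ℕ → ℕ → Prop) : ℕ → ℕ → Prop := fun a b =>
  (a = b ∧ 1 ≤ a ∧ a ≤ n + 1) ∨ (b < a ∧ r a b) ∨ (a < b ∧ 2 ≤ a ∧ r (a - 1) (b - 1))

/-- A relation is modern: no configuration `x ◁ y` and `z ◁ y` with `x < y < z`. -/
def ModernRel (r : ℕ → ℕ → Prop) : Prop :=
  ¬∃ x y z, x < y ∧ y < z ∧ r x y ∧ r z y

/-- A new interval-poset of size `m`: no increasing relation starting at `1`, no decreasing
relation starting at `m`, and no pair of relations `i+1 ◁ j+1` and `j ◁ i` with `i < j`. -/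
def NewIP (m : ℕ) (r : ℕ → ℕ → Prop) : Prop :=
  IsIntervalPoset m r ∧
  (¬∃ y, 1 < y ∧ r 1 y) ∧
  (¬∃ x, x < m ∧ r m x) ∧
  ¬∃ i j, i < j ∧ r (i + 1) (j + 1) ∧ r j i

/-- The fall of a relation of size `m`: keep the decreasing relations, shift the increasing
relations by `−1`, on the ground set `{1,…,m−1}`. -/
def fallRel (m : ℕ) (r : ℕ → ℕ → Prop) : ℕ → ℕ → Prop := fun a b =>
  (a = b ∧ 1 ≤ a ∧ a ≤ m - 1) ∨ (b < a ∧ r a b) ∨ (a < b ∧ r (a + 1) (b + 1))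

/-- Iterated rise: `riseIter n r k` is the `k`-th rise of a relation of size `n`. -/
def riseIter (n : ℕ) (r : ℕ → ℕ → Prop) : ℕ → (ℕ → ℕ → Prop)
  | 0 => r
  | k + 1 => riseRel (n + k) (riseIter n r k)

/-- An infinitely modern relation: no configuration `w ◁ x` and `z ◁ y` with `w < x < y < z`. -/
def InfModernRel (r : ℕ → ℕ → Prop) : Prop :=
  ¬∃ w x y z, w < x ∧ x < y ∧ y < z ∧ r w x ∧ r z y

open Classical in
/-- `irStat n r`: the smallest `k` with an increasing relation `k ◁ k+1`, and `n` if none. -/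
noncomputable def irStat (n : ℕ) (r : ℕ → ℕ → Prop) : ℕ :=
  if ∃ k, r k (k + 1) then sInf {k | r k (k + 1)} else n

open Classical in
/-- `drStat n r`: the largest `i` with a decreasing relation `i ◁ i−1`, and `1` if none. -/
noncomputable def drStat (n : ℕ) (r : ℕ → ℕ → Prop) : ℕ :=
  if ∃ i, 2 ≤ i ∧ r i (i - 1) then sSup {i | 2 ≤ i ∧ r i (i - 1)} else 1

/-!
Label vertices in in-order, so that the subtree of vertex `i` of `T` is an interval ending at
`rend T i`. If `rend S ≤ rend T` pointwise, then `S ≤ T` in the Tamari order: the least `i` with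
`rend S i < rend T i` is a left child, and the rotation at its parent raises `rend S i` to the
parent's value, which is still at most `rend T i`; the total gap decreases.

In `T_π` the right chain from `i` ends at `rend T i` and right children share their `rend`, so
`rend T i` is the largest element of the block of `i`. Coarsening the partition can only raise
block maxima.
-/

namespace BT

/-- In in-order labelling, the subtree of vertex `i` is an interval ending at `rend T i`. -/
def rend : BT → ℕ → ℕ
  | .leaf, _ => 0
  | .node l r, i =>
      if i ≤ l.size then rend l i
      else if i = l.size + 1 then l.size + r.size + 1
      else rend r (i - (l.size + 1)) + (l.size + 1)

theorem rend_node_of_le {l r : BT} {i : ℕ} (h : i ≤ l.size) : rend (node l r) i = rend l i := by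
  simp [rend, h]

theorem rend_node_root (l r : BT) : rend (node l r) (l.size + 1) = (node l r).size := by
  simp [rend, size]

theorem rend_node_of_lt {l r : BT} {i : ℕ} (h : l.size + 1 < i) :
    rend (node l r) i = rend r (i - (l.size + 1)) + (l.size + 1) := by
  simp only [rend, if_neg (show ¬i ≤ l.size by omega), if_neg (show i ≠ l.size + 1 by omega)]

theorem le_rend : ∀ {T : BT} {i : ℕ}, 1 ≤ i → i ≤ T.size → i ≤ T.rend i
  | leaf, _, _, h => by simp [size] at h; omega
  | node l r, i, h1, h2 => by
    simp only [size] at h2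
    simp only [rend]
    split_ifs with hl
    · exact le_rend h1 hl
    · omega
    · have := le_rend (T := r) (i := i - (l.size + 1)) (by omega) (by omega)
      omega

theorem rend_le_size : ∀ {T : BT} {i : ℕ}, 1 ≤ i → i ≤ T.size → T.rend i ≤ T.size
  | leaf, _, _, h => by simp [size] at h; omega
  | node l r, i, h1, h2 => by
    simp only [size] at h2 ⊢
    simp only [rend]
    split_ifs with hl
    · have := rend_le_size h1 hl
      omega
    · omega
    · have := rend_le_size (T := r) (i := i - (l.size + 1)) (by omega) (by omega)
      omega

theorem rend_le_rend_of_le_rend : ∀ {T : BT} {i j : ℕ}, 1 ≤ i → i ≤ T.size → i ≤ j →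
    j ≤ T.rend i → T.rend j ≤ T.rend i
  | leaf, _, _, _, h, _, _ => by simp [size] at h; omega
  | node l r, i, j, h1, h2, hij, hj => by
    simp only [size] at h2
    rcases lt_trichotomy i (l.size + 1) with hi | rfl | hi
    · have := rend_le_size h1 (show i ≤ l.size by omega)
      rw [rend_node_of_le (by omega)] at hj ⊢
      rw [rend_node_of_le (by omega)]
      exact rend_le_rend_of_le_rend h1 (by omega) hij hj
    · rw [rend_node_root]
      exact rend_le_size (by omega) (by rw [rend_node_root] at hj; exact hj)
    · rw [rend_node_of_lt hi] at hj ⊢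
      rw [rend_node_of_lt (by omega)]
      have := rend_le_rend_of_le_rend (T := r) (i := i - (l.size + 1)) (j := j - (l.size + 1))
        (by omega) (by omega) (by omega) (by omega)
      omega

theorem rend_node_lt_size {l r : BT} {i : ℕ} (h1 : 1 ≤ i) (h2 : i ≤ l.size) :
    rend (node l r) i < (node l r).size := by
  rw [rend_node_of_le h2]
  have := rend_le_size h1 h2
  simp only [size]
  omega

theorem eq_of_rend_eq : ∀ {S T : BT}, S.size = T.size →
    (∀ i, 1 ≤ i → i ≤ S.size → S.rend i = T.rend i) → S = T
  | leaf, leaf, _, _ => rfl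
  | leaf, node _ _, h, _ | node _ _, leaf, h, _ => by simp [size] at h
  | node lS rS, node lT rT, hsz, hv => by
    simp only [size] at hsz hv
    have hl : lS.size = lT.size := by
      rcases lt_trichotomy lS.size lT.size with h | h | h
      · have := hv (lS.size + 1) (by omega) (by omega)
        have := rend_node_lt_size (r := rT) (show 1 ≤ lS.size + 1 by omega) h
        rw [rend_node_root] at *
        simp only [size] at *
        omega
      · exact h
      · have := hv (lT.size + 1) (by omega) (by omega)
        have := rend_node_lt_size (r := rS) (show 1 ≤ lT.size + 1 by omega) h
        rw [rend_node_root] at *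
        simp only [size] at *
        omega
    have hleft : lS = lT := eq_of_rend_eq hl fun i h1 h2 => by
      simpa [rend_node_of_le h2, rend_node_of_le (hl ▸ h2)] using hv i h1 (by omega)
    have hright : rS = rT := eq_of_rend_eq (by omega) fun i h1 h2 => by
      have := hv (i + (lS.size + 1)) (by omega) (by omega)
      rw [rend_node_of_lt (by omega), rend_node_of_lt (by omega)] at this
      simp only [hl, Nat.add_sub_cancel] at this
      omega
    rw [hleft, hright]

theorem Rot.size_eq {S S' : BT} (h : Rot S S') : S'.size = S.size := by
  induction h <;> simp only [size] at * <;> omega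

theorem rend_node_congr_left {l l' r : BT} (hs : l'.size = l.size) {j : ℕ} (hj : l.size < j) :
    rend (node l' r) j = rend (node l r) j := by
  simp only [rend, hs, if_neg (show ¬j ≤ l.size by omega)]

theorem rend_node_congr_right {l r r' : BT} (hs : r'.size = r.size) {j : ℕ}
    (hj : j ≤ l.size + 1) : rend (node l r') j = rend (node l r) j := by
  simp only [rend, hs]
  split_ifs <;> first | rfl | omega

theorem rend_rot_root (a b c : BT) {j : ℕ} (hj : j ≠ a.size + 1) :
    rend (node a (node b c)) j = rend (node (node a b) c) j := by
  simp only [rend, size]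
  split_ifs <;> (try simp only [↓reduceIte, *]) <;> first
    | rfl
    | omega
    | rw [show j - (a.size + 1) - (b.size + 1) = j - (a.size + b.size + 1 + 1) by omega]; omega

theorem eq_rootLabel_of_rend_eq_size {T : BT} {i : ℕ} (h1 : 1 ≤ i) (h2 : i ≤ T.size)
    (hi : T.rend i = T.size) (hfirst : ∀ q, 1 ≤ q → q < i → T.rend q ≠ T.rend i) :
    i = T.rootLabel := by
  cases T with
  | leaf => simp [size] at h2; omega
  | node a b =>
    rcases lt_trichotomy i (a.size + 1) with h | h | h
    · exact absurd hi (rend_node_lt_size h1 (by omega)).ne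
    · exact h
    · exact absurd (hi.trans (rend_node_root a b).symm) (hfirst _ (by omega) h).symm

/-- The hypothesis `hfirst` makes `i` the left child of `p = S.rend i + 1`; rotating at `p`
hangs the right subtree of `p` below `i`. -/
theorem exists_rot_rend : ∀ {S : BT} {i : ℕ}, 1 ≤ i → i ≤ S.size → S.rend i < S.size →
    (∀ q, 1 ≤ q → q < i → S.rend q ≠ S.rend i) →
    ∃ S', Rot S S' ∧ S'.rend i = S.rend (S.rend i + 1) ∧
      ∀ j, j ≠ i → 1 ≤ j → j ≤ S.size → S'.rend j = S.rend j
  | leaf, _, _, h, _, _ => by simp [size] at h; omega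
  | node l r, i, h1, h2, hlt, hfirst => by
    simp only [size] at h2
    rcases lt_trichotomy i (l.size + 1) with hi | rfl | hi
    · have hil : i ≤ l.size := by omega
      rw [rend_node_of_le hil] at hlt hfirst ⊢
      by_cases hsub : l.rend i < l.size
      · obtain ⟨l', hrot, hi', hj'⟩ := exists_rot_rend h1 hil hsub fun q hq1 hq2 => by
          simpa [rend_node_of_le (show q ≤ l.size by omega), rend_node_of_le hil]
            using hfirst q hq1 hq2
        have hs := hrot.size_eq
        refine ⟨node l' r, .left r hrot, ?_, fun j hji hj1 hj2 => ?_⟩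
        · rw [rend_node_of_le (hs ▸ hil), hi', rend_node_of_le hsub]
        · by_cases hjl : j ≤ l.size
          · rw [rend_node_of_le (hs ▸ hjl), rend_node_of_le hjl, hj' j hji hj1 hjl]
          · exact rend_node_congr_left hs (by omega)
      · obtain ⟨a, b, rfl⟩ : ∃ a b, l = node a b := by
          cases l with
          | leaf => simp [size] at hil; omega
          | node a b => exact ⟨a, b, rfl⟩
        obtain rfl : i = a.size + 1 := eq_rootLabel_of_rend_eq_size h1 hil
          (by have := rend_le_size h1 hil; omega) fun q hq1 hq2 => by
            simpa [rend_node_of_le (show q ≤ (node a b).size by omega)] using hfirst q hq1 hq2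
        refine ⟨_, .root a b r, ?_, fun j hji _ _ => rend_rot_root a b r hji⟩
        rw [rend_node_root, rend_node_root, rend_node_root]
        simp only [size]
        omega
    · rw [rend_node_root] at hlt
      omega
    · have hs1 : 1 ≤ i - (l.size + 1) := by omega
      have hs2 : i - (l.size + 1) ≤ r.size := by omega
      rw [rend_node_of_lt hi] at hlt hfirst ⊢
      obtain ⟨r', hrot, hi', hj'⟩ := exists_rot_rend hs1 hs2 (by simp only [size] at hlt; omega)
        fun q hq1 hq2 hq => by
          have := hfirst (q + (l.size + 1)) (by omega) (by omega)
          rw [rend_node_of_lt (by omega), Nat.add_sub_cancel] at this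
          omega
      have hs := hrot.size_eq
      have hr := le_rend hs1 hs2
      refine ⟨node l r', .right l hrot, ?_, fun j hji hj1 hj2 => ?_⟩
      · rw [rend_node_of_lt (by omega), rend_node_of_lt (by omega), hi',
          show r.rend (i - (l.size + 1)) + (l.size + 1) + 1 - (l.size + 1)
            = r.rend (i - (l.size + 1)) + 1 by omega]
      · by_cases hjr : l.size + 1 < j
        · simp only [size] at hj2
          rw [rend_node_of_lt hjr, rend_node_of_lt hjr, hj' _ (by omega) (by omega) (by omega)]
        · exact rend_node_congr_right hs (by omega)

section BracketVector

variable {S T : BT}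

theorem rend_lt_rend_of_rend_eq (hle : ∀ i, 1 ≤ i → i ≤ T.size → S.rend i ≤ T.rend i)
    {i q : ℕ} (hi : i ≤ T.size) (hdef : S.rend i < T.rend i) (hq : 1 ≤ q) (hqi : q < i)
    (heq : S.rend q = S.rend i) (hSi : i ≤ S.rend i) : S.rend q < T.rend q := by
  have hq' := hle q hq (by omega)
  have := rend_le_rend_of_le_rend hq (by omega) hqi.le (by omega : i ≤ T.rend q)
  omega

theorem tamariLE_of_rend_le (hsz : S.size = T.size)
    (hle : ∀ i, 1 ≤ i → i ≤ T.size → S.rend i ≤ T.rend i) : tamariLE S T := by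
  induction hd : ∑ j ∈ Finset.Icc 1 T.size, (T.rend j - S.rend j) using Nat.strong_induction_on
    generalizing S with
  | _ d ih =>
  by_cases hdef : ∃ i, 1 ≤ i ∧ i ≤ T.size ∧ S.rend i < T.rend i
  · classical
    obtain ⟨hi1, hi2, hilt⟩ := Nat.find_spec hdef
    set i := Nat.find hdef
    have hSi := le_rend hi1 (hsz ▸ hi2)
    have hfirst : ∀ q, 1 ≤ q → q < i → S.rend q ≠ S.rend i := fun q hq hqi heq =>
      Nat.find_min hdef hqi
        ⟨hq, by omega, rend_lt_rend_of_rend_eq hle hi2 hilt hq hqi heq hSi⟩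
    have hTi := rend_le_size hi1 hi2
    obtain ⟨S', hrot, hi', hj'⟩ := exists_rot_rend hi1 (by omega) (by omega) hfirst
    have hp1 := le_rend (T := S) (i := S.rend i + 1) (by omega) (by omega)
    have hp2 := hle (S.rend i + 1) (by omega) (by omega)
    have hp3 := rend_le_rend_of_le_rend (T := T) (j := S.rend i + 1) hi1 hi2 (by omega)
      (by omega)
    have hle' : ∀ j, 1 ≤ j → j ≤ T.size → S'.rend j ≤ T.rend j := fun j hj1 hj2 => by
      by_cases hji : j = i
      · subst hji
        omega
      · rw [hj' j hji hj1 (by omega)]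
        exact hle j hj1 hj2
    refine .head hrot (ih _ ?_ (hrot.size_eq.trans hsz) hle' rfl)
    rw [← hd]
    refine Finset.sum_lt_sum (fun j hj => ?_) ⟨i, Finset.mem_Icc.2 ⟨hi1, hi2⟩, by omega⟩
    obtain ⟨hj1, hj2⟩ := Finset.mem_Icc.1 hj
    by_cases hji : j = i
    · subst hji
      omega
    · rw [hj' j hji hj1 (by omega)]
  · simp only [not_exists, not_and, not_lt] at hdef
    obtain rfl : S = T := eq_of_rend_eq hsz fun i h1 h2 =>
      le_antisymm (hle i h1 (by omega)) (hdef i h1 (by omega))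
    exact .refl

end BracketVector

theorem rootLabel_mem_Icc {T : BT} (hT : T ≠ leaf) :
    1 ≤ T.rootLabel ∧ T.rootLabel ≤ T.size := by
  cases T with
  | leaf => exact absurd rfl hT
  | node l r => simp only [rootLabel, size]; omega

theorem rend_rootLabel {T : BT} (hT : T ≠ leaf) : T.rend T.rootLabel = T.size := by
  cases T with
  | leaf => exact absurd rfl hT
  | node l r => exact rend_node_root l r

theorem rcRel.bounds : ∀ {T : BT} {a b : ℕ}, T.rcRel a b →
    1 ≤ a ∧ a ≤ T.size ∧ 1 ≤ b ∧ b ≤ T.size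
  | node l r, a, b, .inl ⟨ha, hr, hb⟩ => by
    have := rootLabel_mem_Icc hr
    simp only [size]
    omega
  | node l r, a, b, .inr (.inl h) => by
    have := rcRel.bounds h
    simp only [size]
    omega
  | node l r, a, b, .inr (.inr ⟨a', b', h, ha, hb⟩) => by
    have := rcRel.bounds h
    simp only [size]
    omega

/-- A right child lies in the right subtree, which ends where its parent's subtree ends. -/
theorem rcRel.rend_eq : ∀ {T : BT} {a b : ℕ}, T.rcRel a b → T.rend a = T.rend b
  | node l r, a, b, .inl ⟨ha, hr, hb⟩ => by
    have := rootLabel_mem_Icc hr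
    subst ha hb
    rw [rend_node_root, rend_node_of_lt (by omega), Nat.add_sub_cancel_left, rend_rootLabel hr]
    simp only [size]
    omega
  | node l r, a, b, .inr (.inl h) => by
    have := h.bounds
    rw [rend_node_of_le this.2.1, rend_node_of_le this.2.2.2, h.rend_eq]
  | node l r, a, b, .inr (.inr ⟨a', b', h, ha, hb⟩) => by
    have := h.bounds
    subst ha hb
    rw [rend_node_of_lt (by omega), rend_node_of_lt (by omega), Nat.add_assoc, Nat.add_assoc,
      Nat.add_sub_cancel, Nat.add_sub_cancel, h.rend_eq]

theorem rend_eq_of_sameBlock {T : BT} {a b : ℕ} (h : sameBlock T a b) : T.rend a = T.rend b := by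
  induction h with
  | rel x y hxy => exact hxy.elim rcRel.rend_eq fun h => h.rend_eq.symm
  | refl => rfl
  | symm _ _ _ ih => exact ih.symm
  | trans _ _ _ _ _ ih1 ih2 => exact ih1.trans ih2

theorem reflTransGen_rcRel_node_right (l : BT) {r : BT} {a b : ℕ}
    (h : Relation.ReflTransGen r.rcRel a b) :
    Relation.ReflTransGen (node l r).rcRel (a + l.size + 1) (b + l.size + 1) :=
  Relation.ReflTransGen.lift (· + l.size + 1)
    (fun a b h => Or.inr (Or.inr ⟨a, b, h, rfl, rfl⟩)) _ _ h

theorem reflTransGen_rcRel_rend : ∀ {T : BT} {i : ℕ}, 1 ≤ i → i ≤ T.size →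
    Relation.ReflTransGen T.rcRel i (T.rend i)
  | leaf, _, _, h => by simp [size] at h; omega
  | node l r, i, h1, h2 => by
    simp only [size] at h2
    rcases lt_trichotomy i (l.size + 1) with hi | rfl | hi
    · rw [rend_node_of_le (by omega)]
      exact Relation.ReflTransGen.mono (fun _ _ h => Or.inr (Or.inl h)) _ _
        (reflTransGen_rcRel_rend h1 (by omega))
    · rw [rend_node_root]
      cases r with
      | leaf => exact .refl
      | node r1 r2 =>
        have hstep : (node l (node r1 r2)).rcRel (l.size + 1) (r1.size + 1 + l.size + 1) :=
          .inl ⟨rfl, BT.noConfusion, by simp only [rootLabel]; omega⟩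
        have htail := reflTransGen_rcRel_node_right l
          (reflTransGen_rcRel_rend (T := node r1 r2) (i := r1.size + 1) (by omega) (by simp [size]))
        rw [rend_node_root] at htail
        convert Relation.ReflTransGen.head hstep htail using 1
        simp only [size]
        omega
    · rw [rend_node_of_lt hi]
      have := reflTransGen_rcRel_node_right l
        (reflTransGen_rcRel_rend (T := r) (i := i - (l.size + 1)) (by omega) (by omega))
      convert this using 1 <;> omega

theorem partOf_rend {T : BT} {i : ℕ} (h1 : 1 ≤ i) (h2 : i ≤ T.size) : partOf T i (T.rend i) :=
  ⟨Relation.EqvGen.mono (fun _ _ => Or.inl) _ _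
    (Relation.EqvGen.reflTransGen_le_eqvGen _ _ _ (reflTransGen_rcRel_rend h1 h2)), h1, h2,
    h1.trans (le_rend h1 h2), rend_le_size h1 h2⟩

theorem rend_le_rend_of_partOf_le {S T : BT} (h : ∀ a b, partOf S a b → partOf T a b) {i : ℕ}
    (h1 : 1 ≤ i) (h2 : i ≤ S.size) : S.rend i ≤ T.rend i := by
  obtain ⟨hsb, -, -, hb1, hb2⟩ := h _ _ (partOf_rend h1 h2)
  rw [rend_eq_of_sameBlock hsb]
  exact le_rend hb1 hb2

theorem tamariLE_of_partOf_le {S T : BT} (hsz : S.size = T.size)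
    (h : ∀ a b, partOf S a b → partOf T a b) : tamariLE S T :=
  tamariLE_of_rend_le hsz fun _ h1 h2 => rend_le_rend_of_partOf_le h h1 (hsz ▸ h2)

end BT

theorem ncPartition_refinement_tamari_general (n : ℕ) (r1 r2 : ℕ → ℕ → Prop) (T1 T2 : BT)
    (href : ∀ a b, r1 a b → r2 a b)
    (hT1 : T1.size = n) (hT2 : T2.size = n)
    (e1 : partOf T1 = r1) (e2 : partOf T2 = r2) :
    BT.tamariLE T1 T2 := by
  subst e1 e2
  exact BT.tamariLE_of_partOf_le (hT1.trans hT2.symm) href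

/-- if `π1 ≤ π2` in the refinement order on noncrossing partitions, then
`T_{π1} ≤ T_{π2}` in the Tamari lattice. -/
theorem ncPartition_refinement_tamari (n : ℕ) (r1 r2 : ℕ → ℕ → Prop) (T1 T2 : BT)
    (h1 : NCPartition n r1) (h2 : NCPartition n r2)
    (href : ∀ a b, r1 a b → r2 a b)
    (hT1 : T1.size = n) (hT2 : T2.size = n)
    (e1 : partOf T1 = r1) (e2 : partOf T2 = r2) :
    BT.tamariLE T1 T2 :=
  ncPartition_refinement_tamari_general n r1 r2 T1 T2 href hT1 hT2 e1 e2
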